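/- arXiv:1904.11197 — 3 statements merged into one kernel-verified Lean document; each statement's English description precedes it below -/
import Mathlib

section
/- Let {π₁,...,πₙ} (n ≥ 3) be a (k,k-t)-SCID with k ≥ 2t. With S the span of all πᵢ and I the span of all pairwise intersections, dim S + dim I ≤ 2k + 2(n-2)t - (n-3). -/
/-!
Write `f(A) = dim S(A) + dim I(A)` for the span `S(A)` and the pairwise-intersection span `I(A)`
of a subfamily `A`. By the modular law, adding a space `π x` to `A` raises `f` by at most
`k - dim (I(A) ∩ J)`, where `J` is spanned by the `π a ∩ π x`, `a ∈ A`.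
For three members `f ≤ 2k + 2t`, and every further member raises `f` by at most `2t - 1`.
If `π i ∩ π j ⊆ π l` for all `i ≠ j` and all `l`, then `I(A) ∩ J` contains the common
intersection, of dimension `k - t` (and `t ≥ 1` since the spaces are distinct). Otherwise start
from a triple with `π i ∩ π j ⊄ π l`: then `(π i ∩ π j) + (π i ∩ π l)` has dimension `> k - t`
inside `π i`, so it meets the `(k - t)`-space `π i ∩ π x` in dimension `> k - 2t`.
-/

open Module Finset

section Lattice

variable {ι α : Type*} [Lattice α] [OrderBot α]

/-- For subspaces `π`, `pairwiseInfSup π A` is the span `I` of the `π i ∩ π j`, `i ≠ j ∈ A`. -/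
def pairwiseInfSup (f : ι → α) (A : Finset ι) : α :=
  A.offDiag.sup fun p => f p.1 ⊓ f p.2

theorem inf_le_pairwiseInfSup (f : ι → α) {A : Finset ι} {i j : ι} (hi : i ∈ A) (hj : j ∈ A)
    (hij : i ≠ j) : f i ⊓ f j ≤ pairwiseInfSup f A :=
  le_sup (f := fun p : ι × ι => f p.1 ⊓ f p.2) (b := (i, j)) (mem_offDiag.2 ⟨hi, hj, hij⟩)

theorem pairwiseInfSup_insert [DecidableEq ι] (f : ι → α) {A : Finset ι} {x : ι} (hx : x ∉ A) :
    pairwiseInfSup f (insert x A) = pairwiseInfSup f A ⊔ A.sup fun a => f a ⊓ f x := by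
  rw [pairwiseInfSup, pairwiseInfSup, offDiag_insert hx, sup_union, sup_union, singleton_product,
    product_singleton, sup_map, sup_map]
  simp only [Function.comp_def, Function.Embedding.coeFn_mk, inf_comm (f x), sup_assoc, sup_idem]

theorem pairwiseInfSup_singleton (f : ι → α) (i : ι) : pairwiseInfSup f {i} = ⊥ := by
  simp [pairwiseInfSup]

theorem inf_inf_le_pairwiseInfSup_inf_sup (f : ι → α) {A : Finset ι} {i j : ι} (hi : i ∈ A)
    (hj : j ∈ A) (hij : i ≠ j) (x : ι) :
    f i ⊓ f j ⊓ f x ≤ pairwiseInfSup f A ⊓ A.sup fun a => f a ⊓ f x :=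
  le_inf (inf_le_left.trans (inf_le_pairwiseInfSup f hi hj hij))
    ((inf_le_inf_right _ inf_le_left).trans (le_sup (f := fun a => f a ⊓ f x) hi))

end Lattice

theorem iSup_iSup_lt_inf_eq_pairwiseInfSup_univ {ι α : Type*} [LinearOrder ι] [Fintype ι]
    [CompleteLattice α] (f : ι → α) :
    ⨆ i, ⨆ j, ⨆ (_ : i < j), f i ⊓ f j = pairwiseInfSup f univ := by
  refine le_antisymm (iSup₂_le fun i j => iSup_le fun hij =>
    inf_le_pairwiseInfSup f (mem_univ i) (mem_univ j) hij.ne) (Finset.sup_le ?_)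
  rintro ⟨i, j⟩ hij
  rcases lt_or_gt_of_ne (mem_offDiag.1 hij).2.2 with h | h
  · exact le_iSup₂_of_le i j (le_iSup_of_le h le_rfl)
  · exact le_iSup₂_of_le j i (le_iSup_of_le h (inf_comm _ _).le)

section Module

variable {F V : Type*} [DivisionRing F] [AddCommGroup V] [Module F V] [FiniteDimensional F V]

theorem Submodule.finrank_add_finrank_le_finrank_add_finrank_inf {P Q R : Submodule F V}
    (hP : P ≤ R) (hQ : Q ≤ R) : finrank F P + finrank F Q ≤ finrank F R + finrank F ↥(P ⊓ Q) := by
  rw [← finrank_sup_add_finrank_inf_eq]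
  exact Nat.add_le_add_right (finrank_mono (sup_le hP hQ)) _

variable {ι : Type*} [DecidableEq ι]

theorem finrank_sup_add_finrank_pairwiseInfSup_insert_le (π : ι → Submodule F V)
    {A : Finset ι} {x : ι} (hx : x ∉ A) :
    finrank F ↥((insert x A).sup π) + finrank F ↥(pairwiseInfSup π (insert x A)) +
        finrank F ↥(pairwiseInfSup π A ⊓ A.sup fun a => π a ⊓ π x) ≤
      finrank F ↥(A.sup π) + finrank F ↥(pairwiseInfSup π A) + finrank F (π x) := by
  rw [sup_insert, pairwiseInfSup_insert π hx]
  have hS := Submodule.finrank_sup_add_finrank_inf_eq (π x) (A.sup π)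
  have hI := Submodule.finrank_sup_add_finrank_inf_eq (pairwiseInfSup π A)
    (A.sup fun a => π a ⊓ π x)
  have hJ : finrank F ↥(A.sup fun a => π a ⊓ π x) ≤ finrank F ↥(π x ⊓ A.sup π) :=
    Submodule.finrank_mono <|
      le_inf (Finset.sup_le fun _ _ => inf_le_right) (sup_mono_fun fun _ _ => inf_le_left)
  omega

theorem finrank_sup_add_finrank_pairwiseInfSup_union_add_card_le (π : ι → Submodule F V)
    {T : Finset ι} {c : ℕ}
    (hstep : ∀ A, T ⊆ A → ∀ x ∉ A,
      finrank F (π x) + 1 ≤ finrank F ↥(pairwiseInfSup π A ⊓ A.sup fun a => π a ⊓ π x) + c)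
    {B : Finset ι} (hB : Disjoint T B) :
    finrank F ↥((T ∪ B).sup π) + finrank F ↥(pairwiseInfSup π (T ∪ B)) + #B ≤
      finrank F ↥(T.sup π) + finrank F ↥(pairwiseInfSup π T) + c * #B := by
  induction B using Finset.induction_on with
  | empty => rw [union_empty, card_empty, mul_zero]
  | insert x B hxB ih =>
    rw [disjoint_insert_right] at hB
    have hx : x ∉ T ∪ B := by simp [hxB, hB.1]
    have hins := finrank_sup_add_finrank_pairwiseInfSup_insert_le π hx
    have hx_step := hstep (T ∪ B) subset_union_left x hx
    have ih := ih hB.2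
    rw [union_insert, card_insert_of_notMem hxB, mul_add_one]
    omega

end Module

section SCID

variable {F V ι : Type*} [DivisionRing F] [AddCommGroup V] [Module F V] [FiniteDimensional F V]

/-- `π` is a `(k, k - t)`-SCID; the field `le` keeps `k - t` from truncating. -/
structure IsSCID (π : ι → Submodule F V) (k t : ℕ) : Prop where
  le : t ≤ k
  finrank_eq : ∀ i, finrank F (π i) = k
  finrank_inf_eq : ∀ i j, i ≠ j → finrank F ↥(π i ⊓ π j) = k - t

namespace IsSCID

variable {π : ι → Submodule F V} {k t : ℕ}

theorem pos_of_injective (h : IsSCID π k t) (hinj : Function.Injective π) {i j : ι}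
    (hij : i ≠ j) : 0 < t := by
  by_contra! ht
  have hi : π i ⊓ π j = π i := Submodule.eq_of_le_of_finrank_eq inf_le_left
    (by rw [h.finrank_inf_eq i j hij, h.finrank_eq]; omega)
  have hj : π i ⊓ π j = π j := Submodule.eq_of_le_of_finrank_eq inf_le_right
    (by rw [h.finrank_inf_eq i j hij, h.finrank_eq]; omega)
  exact hij (hinj (hi.symm.trans hj))

theorem finrank_sup_add_finrank_inf_inf (h : IsSCID π k t) {i j l : ι} (hij : i ≠ j)
    (hil : i ≠ l) :
    finrank F ↥(π i ⊓ π j ⊔ π i ⊓ π l) + finrank F ↥(π i ⊓ π j ⊓ π l) = 2 * (k - t) := by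
  rw [inf_assoc, inf_inf_distrib_left, Submodule.finrank_sup_add_finrank_inf_eq,
    h.finrank_inf_eq i j hij, h.finrank_inf_eq i l hil, two_mul]

theorem le_finrank_inf_inf_add (h : IsSCID π k t) {i j l : ι} (hij : i ≠ j) (hil : i ≠ l) :
    k ≤ finrank F ↥(π i ⊓ π j ⊓ π l) + 2 * t := by
  have hsum := h.finrank_sup_add_finrank_inf_inf hij hil
  have hle : finrank F ↥(π i ⊓ π j ⊔ π i ⊓ π l) ≤ k :=
    h.finrank_eq i ▸ Submodule.finrank_mono (sup_le inf_le_left inf_le_left)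
  have := h.le
  omega

theorem finrank_inf_inf_add_lt (h : IsSCID π k t) {i j l : ι} (hij : i ≠ j)
    (hl : ¬π i ⊓ π j ≤ π l) : finrank F ↥(π i ⊓ π j ⊓ π l) + t < k := by
  have hlt : π i ⊓ π j ⊓ π l < π i ⊓ π j :=
    inf_le_left.lt_of_ne fun heq => hl (heq ▸ inf_le_right)
  have := Submodule.finrank_lt_finrank_of_lt hlt
  rw [h.finrank_inf_eq i j hij] at this
  have := h.le
  omega

theorem finrank_sup_add_finrank_pairwiseInfSup_pair [DecidableEq ι] (h : IsSCID π k t) {i j : ι}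
    (hij : i ≠ j) :
    finrank F ↥(({i, j} : Finset ι).sup π) + finrank F ↥(pairwiseInfSup π {i, j}) = 2 * k := by
  rw [pairwiseInfSup_insert π (notMem_singleton.2 hij), pairwiseInfSup_singleton, bot_sup_eq,
    sup_insert, sup_singleton, sup_singleton, inf_comm, Submodule.finrank_sup_add_finrank_inf_eq,
    h.finrank_eq, h.finrank_eq, two_mul]

theorem finrank_sup_add_finrank_pairwiseInfSup_triple_le [DecidableEq ι] (h : IsSCID π k t)
    {i j l : ι} (hij : i ≠ j) (hil : i ≠ l) (hjl : j ≠ l) :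
    finrank F ↥(({i, j, l} : Finset ι).sup π) + finrank F ↥(pairwiseInfSup π {i, j, l}) ≤
      2 * k + 2 * t := by
  have hi : i ∉ ({j, l} : Finset ι) := by simp [hij, hil]
  have hins := finrank_sup_add_finrank_pairwiseInfSup_insert_le π hi
  have hE := Submodule.finrank_mono <|
    inf_inf_le_pairwiseInfSup_inf_sup π (mem_insert_self j {l}) (mem_insert_of_mem
      (mem_singleton_self l)) hjl i
  have hpair := h.finrank_sup_add_finrank_pairwiseInfSup_pair hjl
  have hlow := h.le_finrank_inf_inf_add hjl hij.symm
  rw [h.finrank_eq] at hins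
  omega

theorem le_finrank_pairwiseInfSup_inf_add_of_le (h : IsSCID π k t) (ht : 0 < t) {A : Finset ι}
    {i j x : ι} (hi : i ∈ A) (hj : j ∈ A) (hij : i ≠ j) (hx : π i ⊓ π j ≤ π x) :
    k + 1 ≤ finrank F ↥(pairwiseInfSup π A ⊓ A.sup fun a => π a ⊓ π x) + 2 * t := by
  have hle := Submodule.finrank_mono (inf_inf_le_pairwiseInfSup_inf_sup π hi hj hij x)
  rw [inf_eq_left.2 hx, h.finrank_inf_eq i j hij] at hle
  have := h.le
  omega

theorem le_finrank_pairwiseInfSup_inf_add_of_not_le (h : IsSCID π k t) {A : Finset ι}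
    {i j l x : ι} (hi : i ∈ A) (hj : j ∈ A) (hl : l ∈ A) (hij : i ≠ j) (hijl : ¬π i ⊓ π j ≤ π l)
    (hx : x ∉ A) :
    k + 1 ≤ finrank F ↥(pairwiseInfSup π A ⊓ A.sup fun a => π a ⊓ π x) + 2 * t := by
  have hil : i ≠ l := by rintro rfl; exact hijl inf_le_left
  have hix : i ≠ x := by rintro rfl; exact hx hi
  have hle := Submodule.finrank_mono <| inf_le_inf
    (sup_le (inf_le_pairwiseInfSup π hi hj hij) (inf_le_pairwiseInfSup π hi hl hil))
    (le_sup (f := fun a => π a ⊓ π x) hi)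
  have hmod := Submodule.finrank_add_finrank_le_finrank_add_finrank_inf
    (sup_le inf_le_left inf_le_left : π i ⊓ π j ⊔ π i ⊓ π l ≤ π i) (inf_le_left : π i ⊓ π x ≤ π i)
  rw [h.finrank_eq, h.finrank_inf_eq i x hix] at hmod
  have hsum := h.finrank_sup_add_finrank_inf_inf hij hil
  have hlt := h.finrank_inf_inf_add_lt hij hijl
  have := h.le
  omega

theorem exists_card_eq_three_forall_step [DecidableEq ι] (h : IsSCID π k t) (ht : 0 < t)
    {a b c : ι} (hab : a ≠ b) (hac : a ≠ c) (hbc : b ≠ c) :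
    ∃ T : Finset ι, #T = 3 ∧ ∀ A, T ⊆ A → ∀ x ∉ A,
      finrank F (π x) + 1 ≤ finrank F ↥(pairwiseInfSup π A ⊓ A.sup fun a => π a ⊓ π x) + 2 * t := by
  by_cases hsunflower : ∀ i j l, i ≠ j → π i ⊓ π j ≤ π l
  · refine ⟨{a, b, c}, card_eq_three.2 ⟨a, b, c, hab, hac, hbc, rfl⟩, fun A hA x _ => ?_⟩
    rw [h.finrank_eq]
    exact h.le_finrank_pairwiseInfSup_inf_add_of_le ht (hA (by simp)) (hA (by simp)) hab
      (hsunflower a b x hab)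
  · push Not at hsunflower
    obtain ⟨i, j, l, hij, hijl⟩ := hsunflower
    have hil : i ≠ l := by rintro rfl; exact hijl inf_le_left
    have hjl : j ≠ l := by rintro rfl; exact hijl inf_le_right
    refine ⟨{i, j, l}, card_eq_three.2 ⟨i, j, l, hij, hil, hjl, rfl⟩, fun A hA x hx => ?_⟩
    rw [h.finrank_eq]
    exact h.le_finrank_pairwiseInfSup_inf_add_of_not_le (hA (by simp)) (hA (by simp))
      (hA (by simp)) hij hijl hx

end IsSCID

end SCID

theorem scid_bound_k_ge_two_t_general (F V : Type*) [Field F]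
    [AddCommGroup V] [Module F V] [FiniteDimensional F V]
    (n k t : ℕ) (hn : 3 ≤ n) (ht : t ≤ k)
    (π : Fin n → Submodule F V) (hinj : Function.Injective π)
    (hdim : ∀ i, finrank F ↥(π i) = k)
    (hint : ∀ i j, i ≠ j → finrank F ↥(π i ⊓ π j) = k - t) :
    finrank F ↥(⨆ i, π i) +
        finrank F ↥(⨆ i, ⨆ j, ⨆ (_ : i < j), π i ⊓ π j) + (n - 3) ≤
      2 * k + 2 * (n - 2) * t := by
  have hπ : IsSCID π k t := ⟨ht, hdim, hint⟩
  obtain ⟨m, rfl⟩ : ∃ m, n = m + 3 := ⟨n - 3, by omega⟩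
  have h01 : (⟨0, by omega⟩ : Fin (m + 3)) ≠ ⟨1, by omega⟩ := by simp
  have h02 : (⟨0, by omega⟩ : Fin (m + 3)) ≠ ⟨2, by omega⟩ := by simp
  have h12 : (⟨1, by omega⟩ : Fin (m + 3)) ≠ ⟨2, by omega⟩ := by simp
  obtain ⟨T, hT, hstep⟩ :=
    hπ.exists_card_eq_three_forall_step (hπ.pos_of_injective hinj h01) h01 h02 h12
  obtain ⟨i, j, l, hij, hil, hjl, rfl⟩ := card_eq_three.1 hT
  have hbase := hπ.finrank_sup_add_finrank_pairwiseInfSup_triple_le hij hil hjl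
  have hgrow := finrank_sup_add_finrank_pairwiseInfSup_union_add_card_le π hstep
    (disjoint_sdiff : Disjoint {i, j, l} (univ \ {i, j, l}))
  rw [union_sdiff_of_subset (subset_univ _), card_univ_sdiff, hT, Fintype.card_fin,
    Nat.add_sub_cancel] at hgrow
  rw [← sup_univ_eq_iSup, iSup_iSup_lt_inf_eq_pairwiseInfSup_univ, Nat.add_sub_cancel,
    show m + 3 - 2 = m + 1 by omega]
  linarith

theorem scid_bound_k_ge_two_t (F V : Type*) [Field F] [Fintype F]
    [AddCommGroup V] [Module F V] [FiniteDimensional F V]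
    (n k t : ℕ) (hn : 3 ≤ n) (ht : t ≤ k) (hkt : 2 * t ≤ k)
    (π : Fin n → Submodule F V) (hinj : Function.Injective π)
    (hdim : ∀ i, finrank F ↥(π i) = k)
    (hint : ∀ i j, i ≠ j → finrank F ↥(π i ⊓ π j) = k - t) :
    finrank F ↥(⨆ i, π i) +
        finrank F ↥(⨆ i, ⨆ j, ⨆ (_ : i < j), π i ⊓ π j) + (n - 3) ≤
      2 * k + 2 * (n - 2) * t :=
  scid_bound_k_ge_two_t_general F V n k t hn ht π hinj hdim hint
end

section
/- If (n-1)(k-t) > k, then there is no (k,k-t)-SCID {π₁,...,πₙ} with dim S + dim I = nk; i.e., every such SCID satisfies dim S + dim I ≤ nk - 1. -/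
/-!
Adding the subspaces one at a time, Grassmann's formula shows that `dim S + dim I` grows by at
most `k` at each step, and by exactly `k` only if the new pairwise intersections `πₐ ∩ πⱼ` meet
the previous `I` trivially. So `dim S + dim I ≤ nk`, and in the case of equality (adding each `πₐ`
last) the `n - 1` subspaces `πᵢ ∩ πⱼ`, `j ≠ i`, of `πᵢ` are independent. Their dimensions then add
up to `(n - 1)(k - t) ≤ k`.
-/

open Module Finset

section Lattice

variable {α ι : Type*} [Lattice α] [OrderBot α] (π : ι → α)

/-- The paper's `I = ⟨πᵢ ∩ πⱼ : i < j⟩` for the subfamily indexed by `s`. -/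
def pairInfSup (s : Finset ι) : α :=
  s.offDiag.sup fun p => π p.1 ⊓ π p.2

@[simp]
theorem pairInfSup_empty : pairInfSup π ∅ = ⊥ := by
  simp [pairInfSup]

theorem inf_le_pairInfSup {s : Finset ι} {i j : ι}
    (hi : i ∈ s) (hj : j ∈ s) (hij : i ≠ j) : π i ⊓ π j ≤ pairInfSup π s :=
  le_sup (f := fun p : ι × ι => π p.1 ⊓ π p.2) (b := (i, j)) (mem_offDiag.mpr ⟨hi, hj, hij⟩)

theorem pairInfSup_insert [DecidableEq ι] {a : ι} {s : Finset ι} (ha : a ∉ s) :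
    pairInfSup π (insert a s) = pairInfSup π s ⊔ s.sup (π a ⊓ π ·) := by
  simp only [pairInfSup, offDiag_insert ha, sup_union, sup_product_left, sup_singleton]
  rw [Finset.sup_congr rfl fun j _ => inf_comm (π j) (π a), sup_assoc, sup_idem]

end Lattice

theorem iSup_lt_inf_eq_pairInfSup_univ {α ι : Type*} [CompleteLattice α] [LinearOrder ι]
    [Fintype ι] (π : ι → α) : ⨆ i, ⨆ j, ⨆ (_ : i < j), π i ⊓ π j = pairInfSup π univ := by
  apply le_antisymm
  · exact iSup_le fun i => iSup_le fun j => iSup_le fun hij =>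
      inf_le_pairInfSup π (mem_univ i) (mem_univ j) hij.ne
  · refine Finset.sup_le fun ⟨i, j⟩ hij => ?_
    rcases (mem_offDiag.mp hij).2.2.lt_or_gt with h | h
    · exact le_iSup₂_of_le i j (le_iSup_of_le h le_rfl)
    · rw [inf_comm]
      exact le_iSup₂_of_le j i (le_iSup_of_le h le_rfl)

namespace Submodule

variable {K V ι : Type*} [DivisionRing K] [AddCommGroup V] [Module K V] [FiniteDimensional K V]

theorem finrank_finset_sup_of_supIndep {s : Finset ι} {f : ι → Submodule K V}
    (hf : s.SupIndep f) : finrank K ↥(s.sup f) = ∑ i ∈ s, finrank K (f i) := by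
  classical
  induction s using Finset.induction_on with
  | empty => simp
  | insert a s ha ih =>
    have hdisj : Disjoint (f a) (s.sup f) := hf (subset_insert a s) (mem_insert_self a s) ha
    have := finrank_sup_add_finrank_inf_eq (f a) (s.sup f)
    rw [hdisj.eq_bot, finrank_bot, ih (hf.subset (subset_insert a s))] at this
    rw [sup_insert, sum_insert ha]
    omega

variable [DecidableEq ι] (π : ι → Submodule K V)

theorem finrank_insert_sup_add_finrank_pairInfSup_le {a : ι} {s : Finset ι} (ha : a ∉ s) :
    finrank K ↥((insert a s).sup π) + finrank K ↥(pairInfSup π (insert a s))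
        + finrank K ↥(pairInfSup π s ⊓ s.sup (π a ⊓ π ·))
      ≤ finrank K ↥(s.sup π) + finrank K ↥(pairInfSup π s) + finrank K (π a) := by
  have hS := finrank_sup_add_finrank_inf_eq (π a) (s.sup π)
  have hI := finrank_sup_add_finrank_inf_eq (pairInfSup π s) (s.sup (π a ⊓ π ·))
  have hJ : finrank K ↥(s.sup (π a ⊓ π ·)) ≤ finrank K ↥(π a ⊓ s.sup π) :=
    finrank_mono (Finset.sup_le fun j hj => inf_le_inf_left _ (le_sup hj))
  rw [sup_insert, pairInfSup_insert π ha]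
  omega

theorem finrank_sup_add_finrank_pairInfSup_le (s : Finset ι) :
    finrank K ↥(s.sup π) + finrank K ↥(pairInfSup π s) ≤ ∑ i ∈ s, finrank K (π i) := by
  induction s using Finset.induction_on with
  | empty => simp
  | insert a s ha ih =>
    have := finrank_insert_sup_add_finrank_pairInfSup_le π ha
    rw [sum_insert ha]
    omega

theorem disjoint_pairInfSup_erase_of_sum_finrank_le {s : Finset ι}
    (hs : ∑ i ∈ s, finrank K ↥(π i) ≤ finrank K ↥(s.sup π) + finrank K ↥(pairInfSup π s))
    {a : ι} (ha : a ∈ s) :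
    Disjoint (pairInfSup π (s.erase a)) ((s.erase a).sup (π a ⊓ π ·)) := by
  have hstep := finrank_insert_sup_add_finrank_pairInfSup_le π (notMem_erase a s)
  have hbound := finrank_sup_add_finrank_pairInfSup_le π (s.erase a)
  rw [insert_erase ha] at hstep
  rw [← add_sum_erase s _ ha] at hs
  rw [disjoint_iff, ← finrank_eq_zero]
  omega

theorem supIndep_inf_of_sum_finrank_le {s : Finset ι}
    (hs : ∑ i ∈ s, finrank K ↥(π i) ≤ finrank K ↥(s.sup π) + finrank K ↥(pairInfSup π s))
    {i : ι} (hi : i ∈ s) : (s.erase i).SupIndep (π i ⊓ π ·) := by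
  refine supIndep_iff_disjoint_erase.mpr fun a ha => ?_
  obtain ⟨hai, has⟩ := mem_erase.mp ha
  have hi' : i ∈ s.erase a := mem_erase.mpr ⟨hai.symm, hi⟩
  refine (disjoint_pairInfSup_erase_of_sum_finrank_le π hs has).symm.mono ?_ ?_
  · rw [inf_comm]
    exact le_sup (f := (π a ⊓ π ·)) hi'
  · refine Finset.sup_le fun j hj => ?_
    obtain ⟨hja, hji, hjs⟩ : j ≠ a ∧ j ≠ i ∧ j ∈ s := by simpa using hj
    exact inf_le_pairInfSup π hi' (mem_erase.mpr ⟨hja, hjs⟩) hji.symm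

theorem sum_finrank_inf_le_of_sum_finrank_le {s : Finset ι}
    (hs : ∑ i ∈ s, finrank K ↥(π i) ≤ finrank K ↥(s.sup π) + finrank K ↥(pairInfSup π s))
    {i : ι} (hi : i ∈ s) : ∑ j ∈ s.erase i, finrank K ↥(π i ⊓ π j) ≤ finrank K ↥(π i) := by
  rw [← finrank_finset_sup_of_supIndep (supIndep_inf_of_sum_finrank_le π hs hi)]
  exact finrank_mono (Finset.sup_le fun _ _ => inf_le_left)

end Submodule

theorem scid_no_max_when_cond_fails_general (F V : Type*) [Field F]
    [AddCommGroup V] [Module F V] [FiniteDimensional F V]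
    (n k t : ℕ) (hcond : k < (n - 1) * (k - t))
    (π : Fin n → Submodule F V)
    (hdim : ∀ i, finrank F ↥(π i) = k)
    (hint : ∀ i j, i ≠ j → finrank F ↥(π i ⊓ π j) = k - t) :
    finrank F ↥(⨆ i, π i) +
      finrank F ↥(⨆ i, ⨆ j, ⨆ (_ : i < j), π i ⊓ π j) ≤ n * k - 1 := by
  have hn : 0 < n := Nat.pos_of_ne_zero fun h => by simp [h] at hcond
  by_contra! hmax
  have htight :
      ∑ i, finrank F ↥(π i) ≤ finrank F ↥(univ.sup π) + finrank F ↥(pairInfSup π univ) := by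
    rw [sup_univ_eq_iSup, ← iSup_lt_inf_eq_pairInfSup_univ]
    simp only [hdim, sum_const, card_univ, Fintype.card_fin, smul_eq_mul]
    exact Nat.le_of_pred_lt hmax
  have hsum := Submodule.sum_finrank_inf_le_of_sum_finrank_le π htight (mem_univ ⟨0, hn⟩)
  rw [sum_congr rfl fun j hj => hint _ _ (ne_of_mem_erase hj).symm, sum_const,
    card_erase_of_mem (mem_univ _), card_univ, Fintype.card_fin, smul_eq_mul, hdim] at hsum
  omega

theorem scid_no_max_when_cond_fails (F V : Type*) [Field F] [Fintype F]
    [AddCommGroup V] [Module F V] [FiniteDimensional F V]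
    (n k t : ℕ) (hn : 2 ≤ n) (ht : t ≤ k) (hcond : k < (n - 1) * (k - t))
    (π : Fin n → Submodule F V) (hinj : Function.Injective π)
    (hdim : ∀ i, finrank F ↥(π i) = k)
    (hint : ∀ i j, i ≠ j → finrank F ↥(π i ⊓ π j) = k - t) :
    finrank F ↥(⨆ i, π i) +
      finrank F ↥(⨆ i, ⨆ j, ⨆ (_ : i < j), π i ⊓ π j) ≤ n * k - 1 :=
  scid_no_max_when_cond_fails_general F V n k t hcond π hdim hint
end

section
/- If 1 ≤ η ≤ n-2 and n ≤ (q^{t(n-η)} - 1)/(q^t - 1), then there exists a (k,k-t)-sunflower {π₁,...,πₙ} with dim S + dim I = 2k + (n-2)t - ηt, where S is the span of all elements and I is the span of all pairwise intersections (the center). -/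
/-!
Let `K = 𝔽_{q^t}`. The points of `ℙ(K^{n-η})`, viewed as `F`-subspaces of
`K^{n-η} ≅ F^{t(n-η)}`, are `(q^{t(n-η)} - 1)/(q^t - 1)` pairwise trivially intersecting
`t`-dimensional subspaces (a Desarguesian spread). Choose `n` of them, among them the `n - η`
coordinate points so that they span, and add a common factor `F^{k-t}` to each: the result is a
sunflower with centre `F^{k-t}`, so `dim I = k - t` and `dim S = k - t + t(n - η)`.
-/

open Function Module
open scoped LinearAlgebra.Projectivization

theorem exists_injective_fin_superset_range {X ι : Type*} [Finite X] [Finite ι] (g : ι → X)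
    {n : ℕ} (hι : Nat.card ι ≤ n) (hn : n ≤ Nat.card X) :
    ∃ f : Fin n → X, Injective f ∧ Set.range g ⊆ Set.range f := by
  obtain ⟨s, hgs, -, hs⟩ := Set.exists_subsuperset_card_eq (Set.subset_univ (Set.range g))
    ((Finite.card_range_le g).trans hι) (by rwa [Set.ncard_univ])
  let e : Fin n ≃ s := (Finite.equivFinOfCardEq hs).symm
  exact ⟨(↑) ∘ e, Subtype.val_injective.comp e.injective,
    fun x hx => ⟨e.symm ⟨x, hgs hx⟩, by simp⟩⟩

theorem iSup_lt_inf_eq {α ι : Type*} [CompleteLattice α] [Preorder ι] {f : ι → α} {c : α}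
    (hf : ∀ i j, i ≠ j → f i ⊓ f j = c) {i₀ j₀ : ι} (h : i₀ < j₀) :
    ⨆ i, ⨆ j, ⨆ (_ : i < j), f i ⊓ f j = c :=
  le_antisymm (iSup_le fun i => iSup₂_le fun j hij => (hf i j hij.ne).le)
    ((hf i₀ j₀ h.ne).ge.trans (le_iSup₂_of_le i₀ j₀ (le_iSup_of_le h le_rfl)))

namespace Projectivization

variable {K V : Type*} [DivisionRing K] [AddCommGroup V] [Module K V]

theorem exists_injective_iSup_submodule_eq_top {ι : Type*} [Finite ι] [Finite (ℙ K V)]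
    (b : Basis ι K V) {n : ℕ} (hι : Nat.card ι ≤ n) (hn : n ≤ Nat.card (ℙ K V)) :
    ∃ p : Fin n → ℙ K V, Injective p ∧ ⨆ i, (p i).submodule = ⊤ := by
  obtain ⟨p, hp, hrange⟩ :=
    exists_injective_fin_superset_range (fun j => mk K (b j) (b.ne_zero j)) hι hn
  refine ⟨p, hp, eq_top_iff.2 ?_⟩
  rw [← b.span_eq, Submodule.span_le]
  rintro _ ⟨j, rfl⟩
  obtain ⟨i, hi⟩ := hrange ⟨j, rfl⟩
  refine Submodule.mem_iSup_of_mem i ?_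
  rw [hi, submodule_mk]
  exact Submodule.mem_span_singleton_self _

theorem disjoint_submodule {p q : ℙ K V} (h : p ≠ q) : Disjoint p.submodule q.submodule :=
  (Submodule.isAtom_iff_finrank_eq_one.2 p.finrank_submodule).disjoint_of_ne
    (Submodule.isAtom_iff_finrank_eq_one.2 q.finrank_submodule) (submodule_injective.ne h)

end Projectivization

namespace Submodule

theorem disjoint_restrictScalars {F K V : Type*} [Semiring F] [Semiring K]
    [AddCommMonoid V] [Module K V] [Module F V] [SMul F K] [IsScalarTower F K V]
    {p q : Submodule K V} (h : Disjoint p q) :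
    Disjoint (p.restrictScalars F) (q.restrictScalars F) := by
  simpa [disjoint_def] using h

theorem finrank_restrictScalars (F : Type*) {K V : Type*} [Field F] [DivisionRing K]
    [AddCommGroup V] [Module K V] [Module F V] [Module F K] [IsScalarTower F K V] [Module.Free F K]
    (p : Submodule K V) : finrank F (p.restrictScalars F) = finrank F K * finrank K p := by
  rw [← finrank_mul_finrank F K]
  exact congrArg _ (p.restrictScalarsEquiv F K V).finrank_eq

section Prod

variable {R U W : Type*} [Ring R] [AddCommGroup U] [Module R U] [AddCommGroup W] [Module R W]

theorem prod_injective (p : Submodule R U) :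
    Injective (p.prod : Submodule R W → Submodule R (U × W)) := fun q q' h => by
  simpa only [prod_comap_inr] using congrArg (comap (LinearMap.inr R U W)) h

theorem prod_iSup {ι : Type*} [Nonempty ι] (p : Submodule R U) (q : ι → Submodule R W) :
    p.prod (⨆ i, q i) = ⨆ i, p.prod (q i) := by
  simp only [LinearMap.prod_eq_sup_map, map_iSup, sup_iSup]

def prodEquiv (p : Submodule R U) (q : Submodule R W) : p.prod q ≃ₗ[R] p × q where
  toFun x := (⟨x.1.1, x.2.1⟩, ⟨x.1.2, x.2.2⟩)
  map_add' _ _ := rfl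
  map_smul' _ _ := rfl
  invFun y := ⟨(y.1, y.2), y.1.2, y.2.2⟩
  left_inv _ := rfl
  right_inv _ := rfl

theorem finrank_prod {R : Type*} [DivisionRing R] [Module R U] [Module R W] (p : Submodule R U)
    (q : Submodule R W) [FiniteDimensional R p] [FiniteDimensional R q] :
    finrank R (p.prod q) = finrank R p + finrank R q := by
  rw [(p.prodEquiv q).finrank_eq, Module.finrank_prod]

end Prod

end Submodule

theorem exists_spanning_partialSpread (F : Type*) [Field F] [Finite F] {W : Type*}
    [AddCommGroup W] [Module F W] [FiniteDimensional F W] {t s n : ℕ} (ht : t ≠ 0)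
    (hW : finrank F W = t * s) (hsn : s ≤ n)
    (hn : n ≤ (Nat.card F ^ (t * s) - 1) / (Nat.card F ^ t - 1)) :
    ∃ V : Fin n → Submodule F W, Injective V ∧ (∀ i, finrank F (V i) = t) ∧
      Pairwise (Disjoint on V) ∧ ⨆ i, V i = ⊤ := by
  obtain ⟨p, _⟩ := CharP.exists F
  have : Fact p.Prime := ⟨CharP.char_is_prime F p⟩
  have : NeZero t := ⟨ht⟩
  let K := FiniteField.Extension F p t
  have hK : finrank F K = t := FiniteField.finrank_extension F p t
  have hcard :
      Nat.card (ℙ K (Fin s → K)) = (Nat.card F ^ (t * s) - 1) / (Nat.card F ^ t - 1) := by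
    rw [Projectivization.card'', Nat.card_fun, FiniteField.natCard_extension, Nat.card_fin,
      pow_mul]
  obtain ⟨P, hP, hPsup⟩ := Projectivization.exists_injective_iSup_submodule_eq_top
    (Pi.basisFun K (Fin s)) (by rwa [Nat.card_fin]) (hcard ▸ hn)
  let e : (Fin s → K) ≃ₗ[F] W := LinearEquiv.ofFinrankEq _ _ <| by
    rw [hW, ← finrank_mul_finrank F K, hK, finrank_fin_fun]
  refine ⟨fun i => ((P i).submodule.restrictScalars F).map e.toLinearMap, ?_, fun i => ?_,
    fun i j hij => ?_, ?_⟩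
  · exact (Submodule.map_injective_of_injective e.injective).comp
      ((Submodule.restrictScalars_injective F K _).comp
        (Projectivization.submodule_injective.comp hP))
  · rw [LinearEquiv.finrank_map_eq, Submodule.finrank_restrictScalars, hK,
      Projectivization.finrank_submodule, mul_one]
  · exact Submodule.disjoint_map e.injective
      (Submodule.disjoint_restrictScalars (Projectivization.disjoint_submodule (hP.ne hij)))
  · rw [← Submodule.map_iSup, ← Submodule.restrictScalars_iSup, hPsup,
      Submodule.restrictScalars_top, Submodule.map_top, LinearEquiv.range]

theorem exists_sunflower_of_partialSpread {F W ι : Type*} [Field F] [AddCommGroup W] [Module F W]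
    [FiniteDimensional F W] [Nonempty ι] {V : ι → Submodule F W} {t : ℕ}
    (hinj : Injective V) (hrank : ∀ i, finrank F (V i) = t)
    (hdisj : Pairwise (Disjoint on V)) (hsup : ⨆ i, V i = ⊤) (a : ℕ) :
    ∃ (π : ι → Submodule F (Fin (a + finrank F W) → F))
      (C : Submodule F (Fin (a + finrank F W) → F)),
      Injective π ∧ (∀ i, finrank F (π i) = a + t) ∧ finrank F C = a ∧
      (∀ i j, i ≠ j → π i ⊓ π j = C) ∧ ⨆ i, π i = ⊤ := by
  let e : ((Fin a → F) × W) ≃ₗ[F] (Fin (a + finrank F W) → F) :=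
    LinearEquiv.ofFinrankEq _ _ (by simp)
  let U := (⊤ : Submodule F (Fin a → F))
  refine ⟨fun i => (U.prod (V i)).map e.toLinearMap, (U.prod ⊥).map e.toLinearMap, ?_,
    fun i => ?_, ?_, fun i j hij => ?_, ?_⟩
  · exact (Submodule.map_injective_of_injective e.injective).comp (U.prod_injective.comp hinj)
  · rw [LinearEquiv.finrank_map_eq, Submodule.finrank_prod, finrank_top, finrank_fin_fun, hrank]
  · rw [LinearEquiv.finrank_map_eq, Submodule.finrank_prod, finrank_top, finrank_fin_fun,
      finrank_bot, add_zero]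
  · rw [← Submodule.map_inf _ e.injective, Submodule.prod_inf_prod, inf_idem,
      disjoint_iff.1 (hdisj hij)]
  · rw [← Submodule.map_iSup, ← Submodule.prod_iSup, hsup, Submodule.prod_top,
      Submodule.map_top, LinearEquiv.range]

theorem sunflower_spectrum_exists_general (F : Type*) [Field F] [Fintype F]
    (n k t η : ℕ) (ht : 1 ≤ t) (htk : t ≤ k)
    (hη₁ : 1 ≤ η) (hη₂ : η ≤ n - 2)
    (hcard : n ≤ ((Fintype.card F) ^ (t * (n - η)) - 1) / ((Fintype.card F) ^ t - 1)) :
    ∃ (m : ℕ) (π : Fin n → Submodule F (Fin m → F)) (C : Submodule F (Fin m → F)),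
      Function.Injective π ∧
      (∀ i, finrank F ↥(π i) = k) ∧
      finrank F ↥C = k - t ∧
      (∀ i j, i ≠ j → π i ⊓ π j = C) ∧
      finrank F ↥(⨆ i, π i) +
        finrank F ↥(⨆ i, ⨆ j, ⨆ (_ : i < j), π i ⊓ π j) =
          2 * k + (n - 2) * t - η * t := by
  rw [← Nat.card_eq_fintype_card] at hcard
  obtain ⟨V, hVinj, hVrank, hVdisj, hVsup⟩ := exists_spanning_partialSpread F
    (W := Fin (t * (n - η)) → F) (by omega) (finrank_fin_fun F) (by omega) hcard
  have : Nonempty (Fin n) := ⟨⟨0, by omega⟩⟩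
  obtain ⟨π, C, hinj, hrank, hC, hinf, hsup⟩ :=
    exists_sunflower_of_partialSpread hVinj hVrank hVdisj hVsup (k - t)
  refine ⟨_, π, C, hinj, fun i => by rw [hrank]; omega, hC, hinf, ?_⟩
  have h01 : (⟨0, by omega⟩ : Fin n) < ⟨1, by omega⟩ := Fin.mk_lt_mk.2 zero_lt_one
  rw [iSup_lt_inf_eq hinf h01, hsup, hC, finrank_top, finrank_fin_fun, finrank_fin_fun]
  have hηt : η * t ≤ 2 * k + (n - 2) * t := le_add_left (Nat.mul_le_mul_right t hη₂)
  zify [htk, hηt, (by omega : η ≤ n), (by omega : 2 ≤ n)]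
  ring

theorem sunflower_spectrum_exists (F : Type*) [Field F] [Fintype F]
    (n k t η : ℕ) (hn : 3 ≤ n) (ht : 1 ≤ t) (htk : t ≤ k)
    (hη₁ : 1 ≤ η) (hη₂ : η ≤ n - 2)
    (hcard : n ≤ ((Fintype.card F) ^ (t * (n - η)) - 1) / ((Fintype.card F) ^ t - 1)) :
    ∃ (m : ℕ) (π : Fin n → Submodule F (Fin m → F)) (C : Submodule F (Fin m → F)),
      Function.Injective π ∧
      (∀ i, finrank F ↥(π i) = k) ∧
      finrank F ↥C = k - t ∧
      (∀ i j, i ≠ j → π i ⊓ π j = C) ∧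
      finrank F ↥(⨆ i, π i) +
        finrank F ↥(⨆ i, ⨆ j, ⨆ (_ : i < j), π i ⊓ π j) =
          2 * k + (n - 2) * t - η * t :=
  sunflower_spectrum_exists_general F n k t η ht htk hη₁ hη₂ hcard
end
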